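/- arXiv:1906.06321 — 4 statements merged into one kernel-verified Lean document; each statement's English description precedes it below -/
import Mathlib

section
/- There exists an absolute constant c > 0 such that the following holds for every dimension d ≥ 1 and all parameters ε_t, ε_s, λ_r with 0 < ε_s ≤ ε_t/d and 0 < λ_r ≤ 1. Let M_1, …, M_k be real symmetric positive semidefinite d×d matrices, each with Frobenius norm at most 1, and suppose that for every t ∈ {1, …, k} there exists a vector x_t ∈ ℝ^d with x_t^T M_t x_t ≥ ε_t and x_t^T (λ_r·I + Σ_{j<t} M_j) x_t ≤ ε_s. Then k ≤ c · d · log(2d/λ_r). -/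
/-!
Let `Aₙ = λ_r I + ∑_{j<n} M_j`. Writing `A_t = BᵀB`, we have `det (A_t + M_t) = det A_t · det (I + N)`
with `N = B⁻ᵀ M_t B⁻¹` positive semidefinite, and `det (I + N) ≥ 1 + tr N`. At `y = B x_t` the
Rayleigh quotient of `N` is `x_tᵀ M_t x_t / x_tᵀ A_t x_t ≥ ε_t / ε_s ≥ d`, and it is at most `tr N`,
so each step multiplies `det Aₙ` by at least `1 + d`. Hence
`(1 + d)^k λ_r^d ≤ det A_k ≤ (tr A_k)^d ≤ (d (k + 1))^d`, the Frobenius bound giving `tr M_j ≤ d`;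
taking logarithms yields `k = O(d log (2d / λ_r))`.
-/

open Matrix Finset

theorem Finset.one_add_sum_le_prod_one_add {ι : Type*} (s : Finset ι) {f : ι → ℝ}
    (hf : ∀ i ∈ s, 0 ≤ f i) : 1 + ∑ i ∈ s, f i ≤ ∏ i ∈ s, (1 + f i) := by
  classical
  induction s using Finset.induction with
  | empty => simp
  | insert a s ha ih =>
    rw [sum_insert ha, prod_insert ha]
    have hfa := hf a (mem_insert_self a s)
    have ih := ih fun i hi => hf i (mem_insert_of_mem hi)
    have hs : 0 ≤ ∑ i ∈ s, f i := sum_nonneg fun i hi => hf i (mem_insert_of_mem hi)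
    nlinarith

theorem pow_mul_le_of_forall_mul_le_succ {R : Type*} [CommSemiring R] [PartialOrder R]
    [IsOrderedRing R] {f : ℕ → R} {a : R} (ha : 0 ≤ a) {k : ℕ}
    (h : ∀ n < k, a * f n ≤ f (n + 1)) : a ^ k * f 0 ≤ f k := by
  induction k with
  | zero => simp
  | succ k ih =>
    calc a ^ (k + 1) * f 0 = a * (a ^ k * f 0) := by ring
      _ ≤ a * f k := mul_le_mul_of_nonneg_left (ih fun n hn => h n (by omega)) ha
      _ ≤ f (k + 1) := h k (lt_add_one k)

namespace Matrix

variable {m : Type*} [Fintype m]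

open scoped MatrixOrder in
theorem PosSemidef.exists_eq_transpose_mul_self {N : Matrix m m ℝ} (hN : N.PosSemidef) :
    ∃ B : Matrix m m ℝ, N = Bᵀ * B := by
  classical
  obtain ⟨B, hB⟩ := CStarAlgebra.nonneg_iff_eq_star_mul_self.mp hN.nonneg
  exact ⟨B, by rwa [star_eq_conjTranspose, conjTranspose_eq_transpose_of_trivial] at hB⟩

theorem dotProduct_transpose_mul_self_mulVec (B : Matrix m m ℝ) (y : m → ℝ) :
    y ⬝ᵥ (Bᵀ * B) *ᵥ y = (B *ᵥ y) ⬝ᵥ (B *ᵥ y) := by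
  rw [← mulVec_mulVec, dotProduct_mulVec, vecMul_transpose]

theorem trace_transpose_mul_self (B : Matrix m m ℝ) : (Bᵀ * B).trace = ∑ j, B j ⬝ᵥ B j := by
  simp only [trace, diag, mul_apply, transpose_apply, dotProduct]
  exact sum_comm

theorem PosSemidef.dotProduct_mulVec_le_trace_mul {N : Matrix m m ℝ} (hN : N.PosSemidef)
    (y : m → ℝ) : y ⬝ᵥ N *ᵥ y ≤ N.trace * (y ⬝ᵥ y) := by
  obtain ⟨B, rfl⟩ := hN.exists_eq_transpose_mul_self
  rw [dotProduct_transpose_mul_self_mulVec, trace_transpose_mul_self, sum_mul]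
  exact sum_le_sum fun j _ => by
    simpa [mulVec, dotProduct, sq] using sum_mul_sq_le_sq_mul_sq univ (B j) y

theorem trace_le_card_mul_sqrt_sum_sq (A : Matrix m m ℝ) :
    A.trace ≤ Fintype.card m * √(∑ i, ∑ j, A i j ^ 2) := by
  rw [trace, ← nsmul_eq_mul, ← card_univ, ← sum_const]
  refine sum_le_sum fun i _ => (le_abs_self _).trans (Real.abs_le_sqrt ?_)
  calc A i i ^ 2 ≤ ∑ j, A i j ^ 2 := single_le_sum (fun j _ => sq_nonneg (A i j)) (mem_univ i)
    _ ≤ ∑ i, ∑ j, A i j ^ 2 :=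
      single_le_sum (f := fun i => ∑ j, A i j ^ 2) (fun i _ => by positivity) (mem_univ i)

variable [DecidableEq m]

theorem PosSemidef.det_le_trace_pow {A : Matrix m m ℝ} (hA : A.PosSemidef) :
    A.det ≤ A.trace ^ Fintype.card m := by
  rw [hA.1.det_eq_prod_eigenvalues, hA.1.trace_eq_sum_eigenvalues, ← card_univ, ← prod_const]
  exact prod_le_prod (fun i _ => hA.eigenvalues_nonneg i)
    fun i _ => single_le_sum (fun j _ => hA.eigenvalues_nonneg j) (mem_univ i)

theorem PosSemidef.one_add_trace_le_det_one_add {N : Matrix m m ℝ} (hN : N.PosSemidef) :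
    1 + N.trace ≤ (1 + N).det := by
  set U := (hN.1.eigenvectorUnitary : Matrix m m ℝ)
  have hU : U * star U = 1 := Unitary.coe_mul_star_self _
  have hconj : 1 + N = U * diagonal (fun i => 1 + hN.1.eigenvalues i) * star U := by
    rw [← diagonal_add, diagonal_one, Matrix.mul_add, Matrix.add_mul, Matrix.mul_one, hU]
    conv_lhs => rw [hN.1.spectral_theorem, Unitary.conjStarAlgAut_apply]
    rfl
  rw [hconj, det_mul, det_mul, mul_right_comm, ← det_mul, hU, det_one, one_mul, det_diagonal,
    hN.1.trace_eq_sum_eigenvalues]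
  exact one_add_sum_le_prod_one_add _ fun i _ => hN.eigenvalues_nonneg i

theorem PosDef.one_add_mul_det_le_det_add {A M : Matrix m m ℝ} (hA : A.PosDef)
    (hM : M.PosSemidef) {r : ℝ} {x : m → ℝ} (hx : x ≠ 0)
    (hr : r * (x ⬝ᵥ A *ᵥ x) ≤ x ⬝ᵥ M *ᵥ x) : (1 + r) * A.det ≤ (A + M).det := by
  have hxAx : 0 < x ⬝ᵥ A *ᵥ x := hA.dotProduct_mulVec_pos hx
  obtain ⟨B, rfl⟩ := hA.posSemidef.exists_eq_transpose_mul_self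
  have hB : IsUnit B.det := by
    have hdet := hA.det_pos
    rw [det_mul, det_transpose] at hdet
    exact isUnit_iff_ne_zero.mpr fun h => by simp [h] at hdet
  have hBinv : B⁻¹ * B = 1 := nonsing_inv_mul B hB
  set N := (B⁻¹)ᵀ * M * B⁻¹
  have hN : N.PosSemidef := hM.conjTranspose_mul_mul_same B⁻¹
  have hsplit : Bᵀ * B + M = Bᵀ * (1 + N) * B := by
    simp only [N, Matrix.mul_add, Matrix.add_mul, Matrix.mul_one, Matrix.mul_assoc, hBinv]
    rw [← Matrix.mul_assoc, ← transpose_mul, hBinv, transpose_one, Matrix.one_mul]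
  have hNy : (B *ᵥ x) ⬝ᵥ N *ᵥ (B *ᵥ x) = x ⬝ᵥ M *ᵥ x := by
    have hNB : N *ᵥ (B *ᵥ x) = (B⁻¹)ᵀ *ᵥ (M *ᵥ x) := by
      simp only [N, mulVec_mulVec, Matrix.mul_assoc, hBinv, Matrix.mul_one]
    rw [hNB, dotProduct_mulVec, vecMul_transpose, mulVec_mulVec, hBinv, one_mulVec]
  have hrN : r ≤ N.trace := by
    rw [dotProduct_transpose_mul_self_mulVec] at hxAx hr
    refine le_of_mul_le_mul_right ?_ hxAx
    calc r * _ ≤ _ := hr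
      _ = _ := hNy.symm
      _ ≤ _ := hN.dotProduct_mulVec_le_trace_mul _
  calc (1 + r) * (Bᵀ * B).det ≤ (1 + N.trace) * (Bᵀ * B).det := by
        gcongr; exact hA.det_pos.le
    _ ≤ (1 + N).det * (Bᵀ * B).det := by
        gcongr
        · exact hA.det_pos.le
        · exact hN.one_add_trace_le_det_one_add
    _ = (Bᵀ * B + M).det := by rw [hsplit, det_mul, det_mul, det_mul]; ring

end Matrix

section RegularizedPrefixSum

variable {m : Type*} [DecidableEq m] {k : ℕ}

def regularizedPrefixSum (lr : ℝ) (M : Fin k → Matrix m m ℝ) (n : ℕ) : Matrix m m ℝ :=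
  lr • 1 + ∑ j ∈ univ.filter (fun j : Fin k => (j : ℕ) < n), M j

variable {lr : ℝ} {M : Fin k → Matrix m m ℝ}

theorem regularizedPrefixSum_posDef (hlr : 0 < lr) (hM : ∀ j, (M j).PosSemidef) (n : ℕ) :
    (regularizedPrefixSum lr M n).PosDef :=
  (PosDef.one.smul hlr).add_posSemidef (posSemidef_sum _ fun j _ => hM j)

theorem regularizedPrefixSum_zero : regularizedPrefixSum lr M 0 = lr • 1 := by
  simp [regularizedPrefixSum]

theorem regularizedPrefixSum_succ {n : ℕ} (hn : n < k) :
    regularizedPrefixSum lr M (n + 1) = regularizedPrefixSum lr M n + M ⟨n, hn⟩ := by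
  have hfilter : univ.filter (fun j : Fin k => (j : ℕ) < n + 1) =
      insert ⟨n, hn⟩ (univ.filter fun j : Fin k => (j : ℕ) < n) := by
    ext j
    simp only [mem_filter, mem_univ, true_and, mem_insert, Fin.ext_iff]
    omega
  rw [regularizedPrefixSum, regularizedPrefixSum, hfilter, sum_insert (by simp), add_comm (M _),
    add_assoc]

theorem one_add_mul_det_regularizedPrefixSum_le_succ [Fintype m] (hlr : 0 < lr)
    (hM : ∀ j, (M j).PosSemidef) {n : ℕ} (hn : n < k) {r : ℝ} {x : m → ℝ} (hx : x ≠ 0)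
    (hr : r * (x ⬝ᵥ regularizedPrefixSum lr M n *ᵥ x) ≤ x ⬝ᵥ M ⟨n, hn⟩ *ᵥ x) :
    (1 + r) * (regularizedPrefixSum lr M n).det ≤ (regularizedPrefixSum lr M (n + 1)).det := by
  rw [regularizedPrefixSum_succ hn]
  exact (regularizedPrefixSum_posDef hlr hM n).one_add_mul_det_le_det_add (hM _) hx hr

theorem regularizedPrefixSum_fin (t : Fin k) :
    regularizedPrefixSum lr M t = lr • 1 + ∑ j with j < t, M j := by
  simp only [regularizedPrefixSum, Fin.lt_def]

theorem regularizedPrefixSum_self : regularizedPrefixSum lr M k = lr • 1 + ∑ j, M j := by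
  simp [regularizedPrefixSum]

theorem trace_regularizedPrefixSum_self_le [Fintype m] {c : ℝ} (hlr1 : lr ≤ 1)
    (hM : ∀ j, (M j).trace ≤ c) :
    (regularizedPrefixSum lr M k).trace ≤ Fintype.card m + k * c := by
  rw [regularizedPrefixSum_self, trace_add, trace_smul, trace_one, trace_sum, smul_eq_mul]
  have hsum : ∑ j, (M j).trace ≤ k * c := by
    simpa using sum_le_sum fun j (_ : j ∈ univ) => hM j
  nlinarith [show (0 : ℝ) ≤ Fintype.card m by positivity]

end RegularizedPrefixSum

theorem le_six_mul_of_mul_log_two_le {d k m : ℝ} (hd : 1 ≤ d) (hk : 0 ≤ k)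
    (hm : Real.log d ≤ m) (h : k * Real.log 2 ≤ d * (Real.log (k + 1) + m)) :
    k ≤ 6 * d * (Real.log 2 + m) := by
  have hd0 : 0 < d := by linarith
  have hlog2 := Real.log_two_gt_d9
  have hm0 : 0 ≤ m := (Real.log_nonneg hd).trans hm
  -- `log y ≤ y - 1` at `y = (k + 1) / (8 d)` trades `d log (k + 1)` for `(k + 1) / 8`
  have hlogk : d * Real.log (k + 1) ≤ (k + 1) / 8 - d + d * (3 * Real.log 2 + Real.log d) := by
    have h8 : Real.log ((k + 1) / (8 * d)) = Real.log (k + 1) - (3 * Real.log 2 + Real.log d) := by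
      rw [Real.log_div (by positivity) (by positivity), Real.log_mul (by norm_num) hd0.ne',
        show (8 : ℝ) = 2 ^ 3 by norm_num, Real.log_pow]
      push_cast; ring
    have := Real.log_le_sub_one_of_pos (show 0 < (k + 1) / (8 * d) by positivity)
    rw [h8] at this
    have hdiv : d * ((k + 1) / (8 * d)) = (k + 1) / 8 := by field_simp
    nlinarith
  have hdm : d * Real.log d ≤ d * m := mul_le_mul_of_nonneg_left hm hd0.le
  nlinarith [mul_nonneg hd0.le hm0, mul_nonneg hk (show 0 ≤ Real.log 2 - 5 / 8 by linarith)]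

theorem nat_le_six_mul_log_of_pow_mul_le {d k : ℕ} (hd : 1 ≤ d) {lr : ℝ} (hlr : 0 < lr)
    (hlr1 : lr ≤ 1) (h : (1 + d : ℝ) ^ k * lr ^ d ≤ (d * (k + 1) : ℝ) ^ d) :
    (k : ℝ) ≤ 6 * d * Real.log (2 * d / lr) := by
  have hD : (1 : ℝ) ≤ d := by exact_mod_cast hd
  have hlog := Real.log_le_log (by positivity) h
  rw [Real.log_mul (by positivity) (by positivity), Real.log_pow, Real.log_pow, Real.log_pow,
    Real.log_mul (by positivity) (by positivity)] at hlog
  have hlog2 : Real.log 2 ≤ Real.log (1 + d) := Real.log_le_log (by norm_num) (by linarith)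
  have hdlr : Real.log (d / lr) = Real.log d - Real.log lr :=
    Real.log_div (by positivity) hlr.ne'
  rw [mul_div_assoc, Real.log_mul (by norm_num) (by positivity)]
  refine le_six_mul_of_mul_log_two_le hD k.cast_nonneg ?_ ?_
  · exact Real.log_le_log (by positivity) (le_div_self (by positivity) hlr hlr1)
  · rw [hdlr]
    nlinarith [mul_le_mul_of_nonneg_left hlog2 (k.cast_nonneg : (0 : ℝ) ≤ k)]

/-- **Potential-function lemma (Lemma mat_potential).**
There is an absolute constant `c > 0` such that for every dimension `d ≥ 1` and
parameters `0 < ε_s ≤ ε_t / d`, `0 < λ_r ≤ 1`, any sequence of symmetric PSD `d × d`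
matrices `M 1, …, M k` with Frobenius norm at most `1`, such that each `M t` admits a
direction `x` with `xᵀ M_t x ≥ ε_t` and `xᵀ (λ_r I + ∑_{j < t} M j) x ≤ ε_s`,
must satisfy `k ≤ c · d · log (2 d / λ_r)`. -/
theorem dmq_potential_bound :
    ∃ c : ℝ, 0 < c ∧
      ∀ (d : ℕ), 1 ≤ d →
      ∀ (εt εs lr : ℝ), 0 < εs → εs ≤ εt / d → 0 < lr → lr ≤ 1 →
      ∀ (k : ℕ) (M : Fin k → Matrix (Fin d) (Fin d) ℝ),
        (∀ t, (M t).PosSemidef) →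
        (∀ t, Real.sqrt (∑ i, ∑ j, (M t i j) ^ 2) ≤ 1) →
        (∀ t : Fin k, ∃ x : Fin d → ℝ,
          εt ≤ x ⬝ᵥ (M t).mulVec x ∧
          x ⬝ᵥ (lr • (1 : Matrix (Fin d) (Fin d) ℝ) +
              ∑ j ∈ Finset.univ.filter (fun j => j < t), M j).mulVec x ≤ εs) →
        (k : ℝ) ≤ c * d * Real.log (2 * d / lr) := by
  refine ⟨6, by norm_num, ?_⟩
  intro d hd εt εs lr hεs hεst hlr hlr1 k M hM hfro hdir
  have hdεs : d * εs ≤ εt := (le_div_iff₀' (by positivity)).mp hεst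
  have hgrowth : ∀ n < k, (1 + d) * (regularizedPrefixSum lr M n).det ≤
      (regularizedPrefixSum lr M (n + 1)).det := by
    intro n hn
    obtain ⟨x, hxM, hxS⟩ := hdir ⟨n, hn⟩
    rw [← regularizedPrefixSum_fin] at hxS
    have hx : x ≠ 0 := by
      rintro rfl
      simp only [zero_dotProduct] at hxM
      nlinarith [show (0 : ℝ) < d * εs by positivity]
    exact one_add_mul_det_regularizedPrefixSum_le_succ hlr hM hn hx
      (by nlinarith [show (0 : ℝ) ≤ d by positivity])
  have hlower : (1 + d : ℝ) ^ k * lr ^ d ≤ (regularizedPrefixSum lr M k).det := by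
    simpa [regularizedPrefixSum_zero, det_smul] using
      pow_mul_le_of_forall_mul_le_succ (by positivity) hgrowth
  have htrace : (regularizedPrefixSum lr M k).trace ≤ d * (k + 1) := by
    have := trace_regularizedPrefixSum_self_le hlr1 fun j =>
      (trace_le_card_mul_sqrt_sum_sq (M j)).trans (mul_le_of_le_one_right (by positivity) (hfro j))
    rw [Fintype.card_fin] at this
    linarith
  have hupper : (regularizedPrefixSum lr M k).det ≤ (d * (k + 1) : ℝ) ^ d := by
    have hSk := (regularizedPrefixSum_posDef hlr hM k).posSemidef
    simpa using hSk.det_le_trace_pow.trans (pow_le_pow_left₀ hSk.trace_nonneg htrace _)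
  exact nat_le_six_mul_log_of_pow_mul_le hd hlr hlr1 (hlower.trans hupper)
end

section
/- Let A be a real symmetric positive definite d×d matrix and M a real symmetric positive semidefinite d×d matrix with positive semidefinite square root M^{1/2}. Suppose ε_t, ε_s > 0 and there exists x ∈ ℝ^d with x^T M x ≥ ε_t and x^T A x ≤ ε_s. Then the largest eigenvalue of M^{1/2} A^{−1} M^{1/2} is at least ε_t/(d·ε_s). -/
open Matrix

/-! With `w = R x`, the Rayleigh quotient of `R A⁻¹ R` at `w` is `(M x)ᵀ A⁻¹ (M x) / xᵀ M x`, and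
Cauchy–Schwarz for the inner product given by `A`, applied to `x` and `A⁻¹ M x`, gives
`(xᵀ M x)² ≤ (xᵀ A x) · (M x)ᵀ A⁻¹ (M x)`. Hence the largest eigenvalue is at least
`xᵀ M x / xᵀ A x ≥ εt / εs`, and `d ≥ 1` because `x ≠ 0`. -/

/-- The largest eigenvalue of a symmetric matrix `B`, characterized as the supremum of
the Rayleigh quotient `zᵀ B z` over unit vectors `z` (Euclidean norm). -/
noncomputable def maxEig {d : ℕ} (B : Matrix (Fin d) (Fin d) ℝ) : ℝ :=
  sSup {r : ℝ | ∃ z : Fin d → ℝ, (∑ i, z i ^ 2) = 1 ∧ r = z ⬝ᵥ B.mulVec z}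

lemma Matrix.IsSymm.dotProduct_mulVec_comm {n : Type*} [Fintype n] {R : Matrix n n ℝ}
    (hR : R.IsSymm) (u v : n → ℝ) :
    u ⬝ᵥ R *ᵥ v = R *ᵥ u ⬝ᵥ v := by
  rw [dotProduct_mulVec, ← vecMul_transpose, hR.eq, dotProduct_comm]

lemma Matrix.PosDef.dotProduct_sq_le_mul_inv {n : Type*} [Fintype n] [DecidableEq n]
    {A : Matrix n n ℝ} (hA : A.PosDef) (x y : n → ℝ) :
    (x ⬝ᵥ y) ^ 2 ≤ (x ⬝ᵥ A *ᵥ x) * (y ⬝ᵥ A⁻¹ *ᵥ y) := by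
  have hsymm : A.IsSymm := by simpa using hA.isHermitian
  have hAA : A *ᵥ A⁻¹ *ᵥ y = y := by
    rw [mulVec_mulVec, mul_nonsing_inv A ((isUnit_iff_isUnit_det A).mp hA.isUnit), one_mulVec]
  have cs := LinearMap.BilinForm.apply_mul_apply_le_of_forall_zero_le (toLinearMap₂' ℝ A)
    (fun v ↦ by simpa [toLinearMap₂'_apply'] using hA.posSemidef.dotProduct_mulVec_nonneg v)
    x (A⁻¹ *ᵥ y)
  simp only [toLinearMap₂'_apply', hAA, hsymm.dotProduct_mulVec_comm (A⁻¹ *ᵥ y)] at cs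
  rwa [dotProduct_comm y x, ← sq, dotProduct_comm (A⁻¹ *ᵥ y)] at cs

lemma isCompact_setOf_sum_sq_eq_one {ι : Type*} [Fintype ι] :
    IsCompact {z : ι → ℝ | ∑ i, z i ^ 2 = 1} := by
  refine Metric.isCompact_of_isClosed_isBounded (isClosed_eq (by fun_prop) continuous_const)
    (Metric.isBounded_closedBall (x := 0) (r := 1) |>.subset fun z hz ↦ ?_)
  rw [mem_closedBall_zero_iff, pi_norm_le_iff_of_nonneg zero_le_one]
  intro i
  rw [Real.norm_eq_abs, ← sq_le_one_iff_abs_le_one, ← hz.out]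
  exact Finset.single_le_sum (fun j _ ↦ sq_nonneg (z j)) (Finset.mem_univ i)

section MaxEig

variable {d : ℕ}

lemma le_maxEig (B : Matrix (Fin d) (Fin d) ℝ) {z : Fin d → ℝ} (hz : ∑ i, z i ^ 2 = 1) :
    z ⬝ᵥ B *ᵥ z ≤ maxEig B := by
  have hbdd : BddAbove ((fun z ↦ z ⬝ᵥ B *ᵥ z) '' {z : Fin d → ℝ | ∑ i, z i ^ 2 = 1}) :=
    isCompact_setOf_sum_sq_eq_one.bddAbove_image (by fun_prop)
  refine le_csSup (hbdd.mono ?_) ⟨z, hz, rfl⟩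
  rintro r ⟨y, hy, rfl⟩
  exact ⟨y, hy, rfl⟩

lemma dotProduct_mulVec_div_le_maxEig (B : Matrix (Fin d) (Fin d) ℝ) {w : Fin d → ℝ}
    (hw : w ≠ 0) : w ⬝ᵥ B *ᵥ w / (w ⬝ᵥ w) ≤ maxEig B := by
  have hpos : 0 < w ⬝ᵥ w := dotProduct_self_star_pos_iff.mpr hw
  set c := (√(w ⬝ᵥ w))⁻¹
  have hc : c * c = (w ⬝ᵥ w)⁻¹ := by rw [← mul_inv, Real.mul_self_sqrt hpos.le]
  have hunit : ∑ i, (c • w) i ^ 2 = 1 := by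
    simp only [Pi.smul_apply, smul_eq_mul, mul_pow, ← Finset.mul_sum, sq c, hc]
    simpa [dotProduct, sq] using inv_mul_cancel₀ hpos.ne'
  calc w ⬝ᵥ B *ᵥ w / (w ⬝ᵥ w) = (c • w) ⬝ᵥ B *ᵥ (c • w) := by
        rw [mulVec_smul, dotProduct_smul, smul_dotProduct, smul_smul, hc, smul_eq_mul,
          inv_mul_eq_div]
    _ ≤ maxEig B := le_maxEig B hunit

end MaxEig

lemma div_le_maxEig_mul_inv_mul {d : ℕ} {A R : Matrix (Fin d) (Fin d) ℝ} (hA : A.PosDef)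
    (hR : R.IsSymm) {x : Fin d → ℝ} (hx : R *ᵥ x ≠ 0) :
    x ⬝ᵥ (R * R) *ᵥ x / (x ⬝ᵥ A *ᵥ x) ≤ maxEig (R * A⁻¹ * R) := by
  set w := R *ᵥ x
  have hx0 : x ≠ 0 := by rintro rfl; simp [w] at hx
  have ha : 0 < x ⬝ᵥ A *ᵥ x := by simpa using hA.dotProduct_mulVec_pos hx0
  have hw : 0 < w ⬝ᵥ w := dotProduct_self_star_pos_iff.mpr hx
  have hRR : x ⬝ᵥ (R * R) *ᵥ x = w ⬝ᵥ w := by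
    rw [← mulVec_mulVec, hR.dotProduct_mulVec_comm]
  have hB : w ⬝ᵥ (R * A⁻¹ * R) *ᵥ w = R *ᵥ w ⬝ᵥ A⁻¹ *ᵥ R *ᵥ w := by
    rw [← mulVec_mulVec, ← mulVec_mulVec, hR.dotProduct_mulVec_comm]
  have cs := hA.dotProduct_sq_le_mul_inv x (R *ᵥ w)
  rw [hR.dotProduct_mulVec_comm x w] at cs
  calc x ⬝ᵥ (R * R) *ᵥ x / (x ⬝ᵥ A *ᵥ x) = w ⬝ᵥ w / (x ⬝ᵥ A *ᵥ x) := by rw [hRR]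
    _ ≤ w ⬝ᵥ (R * A⁻¹ * R) *ᵥ w / (w ⬝ᵥ w) := by
      rw [div_le_div_iff₀ ha hw, hB]
      linear_combination cs
    _ ≤ maxEig (R * A⁻¹ * R) := dotProduct_mulVec_div_le_maxEig _ hx

theorem dmq_eigenvalue_lower_bound_general
    (d : ℕ) (A M R : Matrix (Fin d) (Fin d) ℝ)
    (hA : A.PosDef) (hR : R.PosSemidef) (hRR : R * R = M)
    (εt εs : ℝ) (hεt : 0 < εt)
    (hx : ∃ x : Fin d → ℝ, εt ≤ x ⬝ᵥ M.mulVec x ∧ x ⬝ᵥ A.mulVec x ≤ εs) :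
    εt / (d * εs) ≤ maxEig (R * A⁻¹ * R) := by
  obtain ⟨x, hxM, hxA⟩ := hx
  have hMx : 0 < x ⬝ᵥ M *ᵥ x := hεt.trans_le hxM
  have hx0 : x ≠ 0 := by rintro rfl; simp at hMx
  have hRx : R *ᵥ x ≠ 0 := by intro h; simp [← hRR, ← mulVec_mulVec, h] at hMx
  have ha : 0 < x ⬝ᵥ A *ᵥ x := by simpa using hA.dotProduct_mulVec_pos hx0
  obtain ⟨i, -⟩ := Function.ne_iff.mp hx0
  have hd : (1 : ℝ) ≤ d := Nat.one_le_cast.mpr i.pos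
  calc εt / (d * εs) ≤ x ⬝ᵥ M *ᵥ x / (x ⬝ᵥ A *ᵥ x) :=
        div_le_div₀ hMx.le hxM ha (hxA.trans (le_mul_of_one_le_left (ha.le.trans hxA) hd))
    _ ≤ maxEig (R * A⁻¹ * R) :=
        hRR ▸ div_le_maxEig_mul_inv_mul hA (by simpa using hR.isHermitian) hRx

/-- **Eigenvalue lower bound.**
If `A` is symmetric positive definite, `M` is symmetric positive semidefinite with
positive semidefinite square root `R` (`R * R = M`), and some `x` satisfies
`xᵀ M x ≥ ε_t` and `xᵀ A x ≤ ε_s`, then the largest eigenvalue of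
`M^{1/2} A⁻¹ M^{1/2}` is at least `ε_t / (d ε_s)`. -/
theorem dmq_eigenvalue_lower_bound
    (d : ℕ) (A M R : Matrix (Fin d) (Fin d) ℝ)
    (hA : A.PosDef) (hM : M.PosSemidef) (hR : R.PosSemidef) (hRR : R * R = M)
    (εt εs : ℝ) (hεt : 0 < εt) (hεs : 0 < εs)
    (hx : ∃ x : Fin d → ℝ, εt ≤ x ⬝ᵥ M.mulVec x ∧ x ⬝ᵥ A.mulVec x ≤ εs) :
    εt / (d * εs) ≤ maxEig (R * A⁻¹ * R) :=
  dmq_eigenvalue_lower_bound_general d A M R hA hR hRR εt εs hεt hx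
end

section
/- Let Q be a real symmetric positive semidefinite d×d matrix, let λ > 0, and let θ ∈ ℝ^d. Setting E = (Q + λ·I)^{−1} Q − I, it holds that (Eθ)^T Q (Eθ) ≤ λ ‖θ‖_2^2. -/
open Matrix

/-!
Since `Q = (Q + λI) - λI`, the shrinkage matrix is `E = -λ (Q + λI)⁻¹`. Writing `θ = (Q + λI) v`,
the claim becomes `λ² vᵀQv ≤ λ ‖Qv + λv‖² = λ‖Qv‖² + 2λ² vᵀQv + λ³‖v‖²`, and every term on
the right is nonnegative.
-/

namespace Matrix

variable {n : Type*} [Fintype n] [DecidableEq n]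

theorem inv_add_smul_one_mul_sub_one {R : Type*} [CommRing R] {Q : Matrix n n R} {lam : R}
    (h : IsUnit (Q + lam • 1).det) : (Q + lam • 1)⁻¹ * Q - 1 = -lam • (Q + lam • 1)⁻¹ := by
  have hinv : (Q + lam • 1)⁻¹ * (Q + lam • 1) = 1 := nonsing_inv_mul _ h
  rw [Matrix.mul_add, Matrix.mul_smul, Matrix.mul_one] at hinv
  rw [sub_eq_iff_eq_add', neg_smul, ← sub_eq_add_neg, eq_sub_iff_add_eq]
  exact hinv

theorem PosSemidef.sq_mul_dotProduct_mulVec_le {Q : Matrix n n ℝ} (hQ : Q.PosSemidef)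
    {lam : ℝ} (hlam : 0 ≤ lam) (v : n → ℝ) :
    lam ^ 2 * (v ⬝ᵥ Q *ᵥ v) ≤ lam * ((Q + lam • 1) *ᵥ v ⬝ᵥ (Q + lam • 1) *ᵥ v) := by
  have hexpand : (Q + lam • 1) *ᵥ v ⬝ᵥ (Q + lam • 1) *ᵥ v
      = Q *ᵥ v ⬝ᵥ Q *ᵥ v + 2 * lam * (v ⬝ᵥ Q *ᵥ v) + lam ^ 2 * (v ⬝ᵥ v) := by
    simp only [add_mulVec, smul_mulVec, one_mulVec, add_dotProduct, dotProduct_add,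
      smul_dotProduct, dotProduct_smul, smul_eq_mul, dotProduct_comm (Q *ᵥ v) v]
    ring
  have hQv : 0 ≤ v ⬝ᵥ Q *ᵥ v := by simpa using hQ.dotProduct_mulVec_nonneg v
  have hv : 0 ≤ v ⬝ᵥ v := dotProduct_self_star_nonneg v
  have hQQv : 0 ≤ Q *ᵥ v ⬝ᵥ Q *ᵥ v := dotProduct_self_star_nonneg (Q *ᵥ v)
  rw [hexpand]
  nlinarith [mul_nonneg hlam hQQv, mul_nonneg (pow_nonneg hlam 2) hQv,
    mul_nonneg (pow_nonneg hlam 3) hv]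

end Matrix

/-- **Bound on the ridge shrinkage (regularization-bias) term `I₁`.**
For symmetric PSD `Q`, `λ > 0`, and `E = (Q + λ I)⁻¹ Q - I`, we have
`(E θ)ᵀ Q (E θ) ≤ λ ‖θ‖₂²`. -/
theorem ridge_shrinkage_bias_bound
    (d : ℕ) (Q : Matrix (Fin d) (Fin d) ℝ) (hQ : Q.PosSemidef)
    (lam : ℝ) (hlam : 0 < lam) (θ : Fin d → ℝ)
    (E : Matrix (Fin d) (Fin d) ℝ) (hE : E = (Q + lam • 1)⁻¹ * Q - 1) :
    (E.mulVec θ) ⬝ᵥ Q.mulVec (E.mulVec θ) ≤ lam * ∑ i, θ i ^ 2 := by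
  set A := Q + lam • (1 : Matrix (Fin d) (Fin d) ℝ)
  have hA : IsUnit A.det :=
    (isUnit_iff_isUnit_det A).mp (PosDef.posSemidef_add hQ (PosDef.one.smul hlam)).isUnit
  set v := A⁻¹ *ᵥ θ
  have hθ : θ = A *ᵥ v := by rw [mulVec_mulVec, mul_nonsing_inv A hA, one_mulVec]
  have hEθ : E *ᵥ θ = -lam • v := by
    rw [hE, inv_add_smul_one_mul_sub_one hA, smul_mulVec]
  have hsum : ∑ i, θ i ^ 2 = θ ⬝ᵥ θ := by simp only [dotProduct, sq]
  calc E *ᵥ θ ⬝ᵥ Q *ᵥ (E *ᵥ θ) = lam ^ 2 * (v ⬝ᵥ Q *ᵥ v) := by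
        rw [hEθ, mulVec_smul, smul_dotProduct, dotProduct_smul, smul_eq_mul, smul_eq_mul]
        ring
    _ ≤ lam * (A *ᵥ v ⬝ᵥ A *ᵥ v) := hQ.sq_mul_dotProduct_mulVec_le hlam.le v
    _ = lam * ∑ i, θ i ^ 2 := by rw [hsum, ← hθ]
end

section
/- Let d ≥ 1, let 0 < ε_s ≤ ε_t/d and 0 < λ_r ≤ 1, and let M_1, …, M_k be real symmetric positive semidefinite d×d matrices, each with Frobenius norm at most 1, such that for every t ∈ {1, …, k} there exists x_t ∈ ℝ^d with x_t^T M_t x_t ≥ ε_t and x_t^T (λ_r·I + Σ_{j<t} M_j) x_t ≤ ε_s. Then 2^{k−1} · λ_r^d ≤ (k+1)^d. -/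
open Matrix Finset

/-!
Put `A_t = λ_r I + ∑_{j < t} M_j`. A congruence `T` with `Tᵀ A_t T = 1` turns `A_{t+1}` into
`1 + Tᵀ M_t T`, whose eigenvalues are all at least `1`; in the direction `T⁻¹ x_t` its Rayleigh
quotient is `1 + x_tᵀ M_t x_t / x_tᵀ A_t x_t ≥ 1 + ε_t / ε_s ≥ 2`, so one eigenvalue is at least
`2`. Hence `det A_{t+1} ≥ 2 det A_t` and `det A_k ≥ 2^k λ_r^d`. On the other side, Cauchy–Schwarz
gives `xᵀ M_j x ≤ ‖M_j‖_F |x|² ≤ |x|²`, so every eigenvalue of `A_k` is at most `λ_r + k ≤ k + 1`.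
-/

theorem Finset.le_prod_of_le_of_one_le {ι R : Type*} [CommSemiring R] [PartialOrder R]
    [IsOrderedRing R] {s : Finset ι} {f : ι → R} (h1 : ∀ i ∈ s, 1 ≤ f i) {i : ι} (hi : i ∈ s)
    {a : R} (ha : a ≤ f i) : a ≤ ∏ j ∈ s, f j := by
  classical
  rw [← mul_prod_erase s f hi]
  exact ha.trans <| le_mul_of_one_le_right (zero_le_one.trans (h1 i hi))
    (one_le_prod fun j hj => h1 j (mem_of_mem_erase hj))

namespace Matrix

section Quadratic

variable {n : Type*} [Fintype n]

theorem dotProduct_transpose_mul_mul_mulVec {m R : Type*} [Fintype m] [CommSemiring R]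
    (T : Matrix m n R) (N : Matrix m m R) (x : n → R) :
    x ⬝ᵥ (Tᵀ * N * T) *ᵥ x = (T *ᵥ x) ⬝ᵥ N *ᵥ (T *ᵥ x) := by
  rw [← mulVec_mulVec, ← mulVec_mulVec, dotProduct_mulVec, vecMul_transpose]

theorem dotProduct_self_nonneg {R : Type*} [Ring R] [LinearOrder R] [IsStrictOrderedRing R]
    (x : n → R) : 0 ≤ x ⬝ᵥ x :=
  sum_nonneg fun i _ => mul_self_nonneg (x i)

theorem dotProduct_mulVec_le_sqrt_sum_sq_mul (M : Matrix n n ℝ) (x : n → ℝ) :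
    x ⬝ᵥ M *ᵥ x ≤ √(∑ i, ∑ j, M i j ^ 2) * (x ⬝ᵥ x) := by
  have hexpand : x ⬝ᵥ M *ᵥ x = ∑ p : n × n, M p.1 p.2 * (x p.1 * x p.2) := by
    simp only [Fintype.sum_prod_type, dotProduct, mulVec, mul_sum]
    exact sum_congr rfl fun i _ => sum_congr rfl fun j _ => by ring
  have hsq : ∑ p : n × n, (x p.1 * x p.2) ^ 2 = (x ⬝ᵥ x) ^ 2 := by
    simp only [Fintype.sum_prod_type, dotProduct, sq, sum_mul, mul_sum]
    exact sum_congr rfl fun i _ => sum_congr rfl fun j _ => by ring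
  have hcs := sum_mul_sq_le_sq_mul_sq univ (fun p : n × n => M p.1 p.2) (fun p => x p.1 * x p.2)
  rw [← hexpand, hsq, Fintype.sum_prod_type] at hcs
  calc x ⬝ᵥ M *ᵥ x ≤ √((∑ i, ∑ j, M i j ^ 2) * (x ⬝ᵥ x) ^ 2) :=
        (le_abs_self _).trans (Real.abs_le_sqrt hcs)
    _ = √(∑ i, ∑ j, M i j ^ 2) * (x ⬝ᵥ x) := by
        rw [Real.sqrt_mul (by positivity), Real.sqrt_sq (dotProduct_self_nonneg x)]

end Quadratic

section Hermitian

variable {n : Type*} [Fintype n] [DecidableEq n] {B : Matrix n n ℝ}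

theorem IsHermitian.eq_eigenvectorUnitary_mul_diagonal_mul_transpose (hB : B.IsHermitian) :
    B = (hB.eigenvectorUnitary : Matrix n n ℝ) * diagonal hB.eigenvalues *
      (hB.eigenvectorUnitary : Matrix n n ℝ)ᵀ := by
  conv_lhs => rw [hB.spectral_theorem]
  simp [star_eq_conjTranspose]

theorem IsHermitian.dotProduct_mulVec_le_of_eigenvalues_le (hB : B.IsHermitian) {c : ℝ}
    (hc : ∀ i, hB.eigenvalues i ≤ c) (x : n → ℝ) : x ⬝ᵥ B *ᵥ x ≤ c * (x ⬝ᵥ x) := by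
  set V : Matrix n n ℝ := (↑hB.eigenvectorUnitary : Matrix n n ℝ)ᵀ
  have hV : Vᵀ * 1 * V = 1 := by
    simpa [V, star_eq_conjTranspose] using Unitary.coe_mul_star_self hB.eigenvectorUnitary
  have hnorm : x ⬝ᵥ x = ∑ i, (V *ᵥ x) i ^ 2 := by
    calc x ⬝ᵥ x = x ⬝ᵥ (Vᵀ * 1 * V) *ᵥ x := by rw [hV, one_mulVec]
      _ = _ := by
        rw [dotProduct_transpose_mul_mul_mulVec, one_mulVec]; simp only [dotProduct, sq]
  have hquad : x ⬝ᵥ B *ᵥ x = ∑ i, hB.eigenvalues i * (V *ᵥ x) i ^ 2 := by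
    have hspec : B = Vᵀ * diagonal hB.eigenvalues * V := by
      simpa [V] using hB.eq_eigenvectorUnitary_mul_diagonal_mul_transpose
    rw [congrArg (x ⬝ᵥ · *ᵥ x) hspec, dotProduct_transpose_mul_mul_mulVec]
    simp only [dotProduct, mulVec_diagonal, sq, mul_left_comm]
  rw [hquad, hnorm, mul_sum]
  exact sum_le_sum fun i _ => mul_le_mul_of_nonneg_right (hc i) (sq_nonneg _)

theorem IsHermitian.exists_le_eigenvalues_of_le_dotProduct_mulVec (hB : B.IsHermitian) {c : ℝ}
    {x : n → ℝ} (hx : x ≠ 0) (h : c * (x ⬝ᵥ x) ≤ x ⬝ᵥ B *ᵥ x) : ∃ i, c ≤ hB.eigenvalues i := by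
  obtain ⟨j, -⟩ := Function.ne_iff.mp hx
  obtain ⟨i, -, hmax⟩ := exists_max_image univ hB.eigenvalues ⟨j, mem_univ j⟩
  have hxx : 0 < x ⬝ᵥ x := (dotProduct_self_nonneg x).lt_of_ne' (dotProduct_self_eq_zero.not.mpr hx)
  refine ⟨i, le_of_mul_le_mul_right (h.trans ?_) hxx⟩
  exact hB.dotProduct_mulVec_le_of_eigenvalues_le (fun k => hmax k (mem_univ k)) x

theorem IsHermitian.eigenvalues_eq_dotProduct_mulVec (hB : B.IsHermitian) (i : n) :
    hB.eigenvalues i = ⇑(hB.eigenvectorBasis i) ⬝ᵥ B *ᵥ ⇑(hB.eigenvectorBasis i) := by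
  simpa using hB.eigenvalues_eq i

theorem IsHermitian.dotProduct_eigenvectorBasis_self (hB : B.IsHermitian) (i : n) :
    ⇑(hB.eigenvectorBasis i) ⬝ᵥ ⇑(hB.eigenvectorBasis i) = 1 := by
  have h : inner ℝ (hB.eigenvectorBasis i) (hB.eigenvectorBasis i) = 1 := by
    rw [real_inner_self_eq_norm_sq, hB.eigenvectorBasis.orthonormal.1 i, one_pow]
  rw [EuclideanSpace.inner_eq_star_dotProduct] at h
  simpa [dotProduct_comm] using h

theorem IsHermitian.le_eigenvalues_of_forall_le_dotProduct_mulVec (hB : B.IsHermitian) {c : ℝ}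
    (h : ∀ x, c * (x ⬝ᵥ x) ≤ x ⬝ᵥ B *ᵥ x) (i : n) : c ≤ hB.eigenvalues i := by
  simpa [hB.dotProduct_eigenvectorBasis_self, ← hB.eigenvalues_eq_dotProduct_mulVec] using
    h (hB.eigenvectorBasis i)

theorem IsHermitian.eigenvalues_le_of_forall_dotProduct_mulVec_le (hB : B.IsHermitian) {c : ℝ}
    (h : ∀ x, x ⬝ᵥ B *ᵥ x ≤ c * (x ⬝ᵥ x)) (i : n) : hB.eigenvalues i ≤ c := by
  simpa [hB.dotProduct_eigenvectorBasis_self, ← hB.eigenvalues_eq_dotProduct_mulVec] using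
    h (hB.eigenvectorBasis i)

theorem PosSemidef.det_le_pow_of_forall_dotProduct_mulVec_le {A : Matrix n n ℝ}
    (hA : A.PosSemidef) {c : ℝ} (h : ∀ x, x ⬝ᵥ A *ᵥ x ≤ c * (x ⬝ᵥ x)) :
    A.det ≤ c ^ Fintype.card n := by
  rw [hA.isHermitian.det_eq_prod_eigenvalues, ← card_univ, ← prod_const]
  exact prod_le_prod (fun i _ => by simpa using hA.eigenvalues_nonneg i)
    (fun i _ => by simpa using hA.isHermitian.eigenvalues_le_of_forall_dotProduct_mulVec_le h i)

theorem det_smul_one_add_sum_le {ι : Type*} [Fintype ι] {M : ι → Matrix n n ℝ}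
    (hM : ∀ j, (M j).PosSemidef) (hF : ∀ j, √(∑ a, ∑ b, M j a b ^ 2) ≤ 1) {c : ℝ} (hc : 0 ≤ c) :
    (c • 1 + ∑ j, M j).det ≤ (c + Fintype.card ι) ^ Fintype.card n := by
  refine ((PosSemidef.one.smul hc).add (posSemidef_sum univ fun j _ => hM j))
    |>.det_le_pow_of_forall_dotProduct_mulVec_le fun x => ?_
  have hMx (j : ι) : x ⬝ᵥ M j *ᵥ x ≤ x ⬝ᵥ x := by
    simpa using (dotProduct_mulVec_le_sqrt_sum_sq_mul (M j) x).trans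
      (mul_le_mul_of_nonneg_right (hF j) (dotProduct_self_nonneg x))
  calc x ⬝ᵥ (c • 1 + ∑ j, M j) *ᵥ x = c * (x ⬝ᵥ x) + ∑ j, x ⬝ᵥ M j *ᵥ x := by
        simp [add_mulVec, sum_mulVec, dotProduct_sum, smul_mulVec]
    _ ≤ c * (x ⬝ᵥ x) + ∑ _j : ι, x ⬝ᵥ x := by gcongr with j; exact hMx j
    _ = (c + Fintype.card ι) * (x ⬝ᵥ x) := by
        simp only [sum_const, card_univ, nsmul_eq_mul]; ring

open scoped MatrixOrder in
theorem PosDef.exists_transpose_mul_mul_eq_one {A : Matrix n n ℝ} (hA : A.PosDef) :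
    ∃ T : Matrix n n ℝ, Tᵀ * A * T = 1 := by
  obtain ⟨L, rfl⟩ := CStarAlgebra.nonneg_iff_eq_star_mul_self.mp hA.posSemidef.nonneg
  have hL : IsUnit L.det := by
    have := hA.det_pos.ne'
    rw [det_mul, star_eq_conjTranspose, det_conjTranspose] at this
    exact isUnit_iff_ne_zero.mpr (right_ne_zero_of_mul this)
  refine ⟨L⁻¹, ?_⟩
  rw [star_eq_conjTranspose, conjTranspose_eq_transpose_of_trivial,
    show L⁻¹ᵀ * (Lᵀ * L) * L⁻¹ = (L * L⁻¹)ᵀ * (L * L⁻¹) by simp only [transpose_mul, mul_assoc],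
    mul_nonsing_inv L hL, transpose_one, one_mul]

theorem PosDef.two_mul_det_le_det_add {A M : Matrix n n ℝ} (hA : A.PosDef) (hM : M.PosSemidef)
    {x : n → ℝ} (hx : x ≠ 0) (h : x ⬝ᵥ A *ᵥ x ≤ x ⬝ᵥ M *ᵥ x) : 2 * A.det ≤ (A + M).det := by
  obtain ⟨T, hT⟩ := hA.exists_transpose_mul_mul_eq_one
  have hTM : (Tᵀ * M * T).PosSemidef := by
    simpa [conjTranspose_eq_transpose_of_trivial] using hM.conjTranspose_mul_mul_same T
  have hC : Tᵀ * (A + M) * T = 1 + Tᵀ * M * T := by rw [mul_add, add_mul, hT]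
  have hCpsd : (1 + Tᵀ * M * T).PosSemidef := PosSemidef.one.add hTM
  have hquadC (y : n → ℝ) :
      y ⬝ᵥ (1 + Tᵀ * M * T) *ᵥ y = (T *ᵥ y) ⬝ᵥ (A + M) *ᵥ (T *ᵥ y) := by
    rw [← hC, dotProduct_transpose_mul_mul_mulVec]
  have hquadA (y : n → ℝ) : y ⬝ᵥ y = (T *ᵥ y) ⬝ᵥ A *ᵥ (T *ᵥ y) := by
    rw [← dotProduct_transpose_mul_mul_mulVec, hT, one_mulVec]
  have hge_one : ∀ i, 1 ≤ hCpsd.isHermitian.eigenvalues i := by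
    refine hCpsd.isHermitian.le_eigenvalues_of_forall_le_dotProduct_mulVec fun y => ?_
    rw [one_mul, hquadA, hquadC, add_mulVec, dotProduct_add]
    have hMy := hM.dotProduct_mulVec_nonneg (T *ᵥ y)
    rw [star_trivial] at hMy
    linarith
  have hTz : T *ᵥ ((Tᵀ * A) *ᵥ x) = x := by
    rw [mulVec_mulVec, mul_eq_one_comm.mp hT, one_mulVec]
  have hz : (Tᵀ * A) *ᵥ x ≠ 0 := fun hz => hx (by rw [← hTz, hz, mulVec_zero])
  obtain ⟨i, hi⟩ := hCpsd.isHermitian.exists_le_eigenvalues_of_le_dotProduct_mulVec (c := 2) hz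
    (by rw [hquadA, hquadC, hTz, add_mulVec, dotProduct_add]; linarith)
  have hdetC : 2 ≤ (1 + Tᵀ * M * T).det := by
    rw [hCpsd.isHermitian.det_eq_prod_eigenvalues]
    exact le_prod_of_le_of_one_le (fun j _ => by simpa using hge_one j) (mem_univ i)
      (by simpa using hi)
  have hdetT : T.det ^ 2 * A.det = 1 := by
    simpa [det_mul, det_transpose, sq, mul_comm, mul_left_comm] using congrArg det hT
  have hdet : (A + M).det = (1 + Tᵀ * M * T).det * A.det := by
    rw [← hC, det_mul, det_mul, det_transpose]
    linear_combination (-(A + M).det) * hdetT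
  rw [hdet]
  exact mul_le_mul_of_nonneg_right hdetC hA.det_pos.le

theorem PosDef.two_pow_mul_det_le_det_add_sum {k : ℕ} {A : Matrix n n ℝ}
    {M : Fin k → Matrix n n ℝ} (hA : A.PosDef) (hM : ∀ j, (M j).PosSemidef)
    (hstep : ∀ t, ∃ x ≠ 0, x ⬝ᵥ (A + ∑ j with j < t, M j) *ᵥ x ≤ x ⬝ᵥ M t *ᵥ x) :
    2 ^ k * A.det ≤ (A + ∑ j, M j).det := by
  have hpartial (t : ℕ) (ht : t ≤ k) :
      2 ^ t * A.det ≤ (A + ∑ j ∈ univ.filter (fun j : Fin k => (j : ℕ) < t), M j).det := by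
    induction t with
    | zero => simp
    | succ t ih =>
      let t' : Fin k := ⟨t, ht⟩
      have hinsert : univ.filter (fun j : Fin k => (j : ℕ) < t + 1) =
          insert t' (univ.filter (fun j : Fin k => (j : ℕ) < t)) := by
        ext j
        simp only [Order.lt_add_one_iff, mem_filter, mem_univ, true_and, mem_insert, Fin.ext_iff,
          t']
        omega
      obtain ⟨x, hx, hxM⟩ := hstep t'
      have hpos : (A + ∑ j ∈ univ.filter (fun j : Fin k => (j : ℕ) < t), M j).PosDef :=
        hA.add_posSemidef (posSemidef_sum _ fun j _ => hM j)
      rw [hinsert, sum_insert (by simp [t']), add_comm (M t'), ← add_assoc, pow_succ, mul_comm _ 2,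
        mul_assoc]
      exact (mul_le_mul_of_nonneg_left (ih (by omega)) zero_le_two).trans
        (hpos.two_mul_det_le_det_add (hM t') hx (by simpa only [Fin.lt_def] using hxM))
  simpa only [filter_true_of_mem fun (j : Fin k) _ => j.isLt] using hpartial k le_rfl

end Hermitian

end Matrix

/-- **Determinant sandwich.**
If `d ≥ 1`, `0 < ε_s ≤ ε_t / d`, `0 < λ_r ≤ 1`, and `M 1, …, M k` are symmetric PSD
matrices with Frobenius norm at most `1` such that each `M t` admits a direction `x`
with `xᵀ M_t x ≥ ε_t` and `xᵀ (λ_r I + ∑_{j < t} M j) x ≤ ε_s`, then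
`2 ^ (k - 1) · λ_r ^ d ≤ (k + 1) ^ d`. -/
theorem dmq_det_sandwich
    (d : ℕ) (hd : 1 ≤ d) (εt εs lr : ℝ)
    (hεs : 0 < εs) (hle : εs ≤ εt / d) (hlr0 : 0 < lr) (hlr1 : lr ≤ 1)
    (k : ℕ) (M : Fin k → Matrix (Fin d) (Fin d) ℝ)
    (hpsd : ∀ t, (M t).PosSemidef)
    (hF : ∀ t, Real.sqrt (∑ i, ∑ j, (M t i j) ^ 2) ≤ 1)
    (hproc : ∀ t : Fin k, ∃ x : Fin d → ℝ,
        εt ≤ x ⬝ᵥ (M t).mulVec x ∧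
        x ⬝ᵥ (lr • (1 : Matrix (Fin d) (Fin d) ℝ) +
            ∑ j ∈ Finset.univ.filter (fun j => j < t), M j).mulVec x ≤ εs) :
    (2 : ℝ) ^ ((k : ℤ) - 1) * lr ^ d ≤ (k + 1 : ℝ) ^ d := by
  have hdR : (1 : ℝ) ≤ d := by exact_mod_cast hd
  have hεt : 0 < εt := (div_pos_iff_of_pos_right (by linarith)).mp (hεs.trans_le hle)
  have hεst : εs ≤ εt := hle.trans (div_le_self hεt.le hdR)
  have hlower := (PosDef.one.smul hlr0).two_pow_mul_det_le_det_add_sum hpsd fun t => by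
    obtain ⟨x, hxM, hxA⟩ := hproc t
    refine ⟨x, fun hx => hεt.not_ge ?_, hxA.trans (hεst.trans hxM)⟩
    simpa [hx] using hxM
  have hupper := det_smul_one_add_sum_le hpsd hF hlr0.le
  rw [det_smul, det_one, mul_one, Fintype.card_fin] at hlower
  rw [Fintype.card_fin, Fintype.card_fin] at hupper
  calc (2 : ℝ) ^ ((k : ℤ) - 1) * lr ^ d ≤ 2 ^ k * lr ^ d := by
        gcongr
        exact (zpow_le_zpow_right₀ one_le_two (by omega)).trans_eq (zpow_natCast 2 k)
    _ ≤ (lr • 1 + ∑ j, M j).det := hlower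
    _ ≤ (lr + k) ^ d := hupper
    _ ≤ (k + 1) ^ d := pow_le_pow_left₀ (by positivity) (by linarith) d
end
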